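/- arXiv:2504.15531 — 5 statements merged into one kernel-verified Lean document; each statement's English description precedes it below -/
import Mathlib

section
/- Let ρ be a convex modular on a real vector space X, let (x_n) be a sequence in X_ρ and x ∈ X_ρ. Then ρ(x_n − x) → 0 if and only if for every τ_ρ-open set U ⊆ X_ρ with x ∈ U there exists n₀ such that x_n ∈ U for all n ≥ n₀. -/
open Filter Topology ENNReal

/-- A convex modular on a real vector space `X`. -/
structure IsConvexModular {X : Type*} [AddCommGroup X] [Module ℝ X] (ρ : X → ℝ≥0∞) : Prop where
  zero_iff : ∀ u : X, ρ u = 0 ↔ u = 0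
  neg_eq : ∀ u : X, ρ (-u) = ρ u
  convex : ∀ α : ℝ, 0 ≤ α → α ≤ 1 → ∀ u v : X,
    ρ (α • u + (1 - α) • v) ≤ ENNReal.ofReal α * ρ u + ENNReal.ofReal (1 - α) * ρ v

/-- `X_ρ`, the modular vector space associated to `ρ`. -/
def modularSet {X : Type*} [AddCommGroup X] [Module ℝ X] (ρ : X → ℝ≥0∞) : Set X :=
  {v : X | ∃ l : ℝ, 0 < l ∧ ρ (l • v) < ⊤}

/-- A set `A ⊆ X_ρ` is `τ_ρ`-open if every point of `A` contains a modular ball around it. -/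
def IsTauRhoOpen {X : Type*} [AddCommGroup X] [Module ℝ X] (ρ : X → ℝ≥0∞) (A : Set X) : Prop :=
  A ⊆ modularSet ρ ∧
    ∀ x ∈ A, ∃ ε : ℝ, 0 < ε ∧ {y ∈ modularSet ρ | ρ (y - x) < ENNReal.ofReal ε} ⊆ A

/-!
Modular balls need not be `τ_ρ`-open, since `ρ` satisfies no triangle inequality; the substitute
is that convexity makes `ρ`-limits unique. If `ρ (x n - y) ↛ 0`, pass to a subsequence staying
away from `y`. Either some `w` is a `ρ`-cluster point of it, and then `w` together with a
subsequence `ρ`-converging to `w` is `ρ`-closed (any other `ρ`-cluster point would be a second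
limit), or there is no cluster point and the subsequence itself is `ρ`-closed. In both cases the
complement in `X_ρ` of this `ρ`-closed set is a `τ_ρ`-open neighbourhood of `y` missed by
infinitely many `x n`.
-/

open Set

theorem exists_strictMono_notMem_closure_range {α : Type*} [TopologicalSpace α] {u : ℕ → α}
    {a : α} (h : ¬Tendsto u atTop (𝓝 a)) :
    ∃ φ : ℕ → ℕ, StrictMono φ ∧ a ∉ closure (range (u ∘ φ)) := by
  obtain ⟨s, hs, hfreq⟩ := not_tendsto_iff_exists_frequently_notMem.1 h
  obtain ⟨φ, hφ, hφs⟩ := extraction_of_frequently_atTop hfreq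
  refine ⟨φ, hφ, fun ha => ?_⟩
  obtain ⟨_, hmem, k, rfl⟩ := mem_closure_iff_nhds.1 ha s hs
  exact hφs k hmem

theorem exists_eq_or_mapClusterPt_of_mem_closure_range {α : Type*} [TopologicalSpace α]
    [T1Space α] {u : ℕ → α} {a : α} (ha : a ∈ closure (range u)) :
    (∃ k, u k = a) ∨ MapClusterPt a atTop u := by
  refine or_iff_not_imp_left.2 fun hne => mapClusterPt_atTop_iff_forall_mem_closure.2 fun i => ?_
  have hsplit : range u = u '' Iio i ∪ u '' Ici i := by
    rw [← image_union, Iio_union_Ici, image_univ]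
  rw [hsplit, closure_union, ((finite_Iio i).image u).isClosed.closure_eq] at ha
  exact ha.resolve_left fun ⟨k, _, hk⟩ => hne ⟨k, hk⟩

section Modular

variable {X : Type*} [AddCommGroup X] [Module ℝ X] {ρ : X → ℝ≥0∞}

namespace IsConvexModular

theorem apply_smul_add_smul_le_max (hρ : IsConvexModular ρ) {α : ℝ} (h₀ : 0 ≤ α) (h₁ : α ≤ 1)
    (u v : X) : ρ (α • u + (1 - α) • v) ≤ max (ρ u) (ρ v) :=
  calc ρ (α • u + (1 - α) • v)
      ≤ ENNReal.ofReal α * ρ u + ENNReal.ofReal (1 - α) * ρ v := hρ.convex α h₀ h₁ u v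
    _ ≤ ENNReal.ofReal α * max (ρ u) (ρ v) + ENNReal.ofReal (1 - α) * max (ρ u) (ρ v) := by
        gcongr
        exacts [le_max_left _ _, le_max_right _ _]
    _ = max (ρ u) (ρ v) := by
        rw [← add_mul, ← ENNReal.ofReal_add h₀ (sub_nonneg.2 h₁)]
        simp

theorem eq_of_mapClusterPt_of_tendsto (hρ : IsConvexModular ρ) {s : ℕ → X} {v w : X}
    (hv : MapClusterPt 0 atTop fun j => ρ (s j - v))
    (hw : Tendsto (fun j => ρ (s j - w)) atTop (𝓝 0)) : v = w := by
  have hhalf : ρ ((2⁻¹ : ℝ) • (w - v)) = 0 := by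
    refine le_antisymm (le_of_forall_gt fun ε hε => ?_) bot_le
    obtain ⟨j, hjv, hjw⟩ := ((mapClusterPt_iff_frequently.1 hv _ (gt_mem_nhds hε)).and_eventually
      (hw.eventually (gt_mem_nhds hε))).exists
    calc ρ ((2⁻¹ : ℝ) • (w - v)) = ρ ((2⁻¹ : ℝ) • (s j - v) + (1 - 2⁻¹ : ℝ) • (w - s j)) := by
          congr 1
          module
      _ ≤ max (ρ (s j - v)) (ρ (w - s j)) :=
          hρ.apply_smul_add_smul_le_max (by norm_num) (by norm_num) _ _
      _ < ε := by
          rw [← hρ.neg_eq (w - s j), neg_sub]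
          exact max_lt hjv hjw
  have h := (hρ.zero_iff _).1 hhalf
  rw [smul_eq_zero, sub_eq_zero] at h
  exact (h.resolve_left (by norm_num)).symm

end IsConvexModular

/-- `C` contains every point `v` that it approaches in `ρ`, i.e. with `⨅ c ∈ C, ρ (c - v) = 0`. -/
def IsRhoClosed (ρ : X → ℝ≥0∞) (C : Set X) : Prop :=
  ∀ v, (0 : ℝ≥0∞) ∈ closure ((fun c => ρ (c - v)) '' C) → v ∈ C

theorem IsRhoClosed.isTauRhoOpen_modularSet_diff {C : Set X} (hC : IsRhoClosed ρ C) :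
    IsTauRhoOpen ρ (modularSet ρ \ C) := by
  refine ⟨sdiff_subset, fun z hz => ?_⟩
  have h0 := mt (hC z) hz.2
  rw [mem_closure_iff_nhds_basis ENNReal.nhds_zero_basis] at h0
  push Not at h0
  obtain ⟨ε, hε, hεC⟩ := h0
  obtain ⟨r, -, hr, hrε⟩ := ENNReal.lt_iff_exists_real_btwn.1 hε
  refine ⟨r, ENNReal.ofReal_pos.1 hr, fun u hu => ⟨hu.1, fun huC => ?_⟩⟩
  exact hεC _ (mem_image_of_mem _ huC) (hu.2.trans hrε)

theorem isRhoClosed_range (hρ : IsConvexModular ρ) {z : ℕ → X}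
    (hz : ∀ w, ¬MapClusterPt 0 atTop fun k => ρ (z k - w)) : IsRhoClosed ρ (range z) := by
  intro v hv
  rw [← range_comp] at hv
  obtain ⟨k, hk⟩ | hcl := exists_eq_or_mapClusterPt_of_mem_closure_range hv
  · exact ⟨k, sub_eq_zero.1 ((hρ.zero_iff _).1 hk)⟩
  · exact absurd hcl (hz v)

theorem isRhoClosed_insert_range (hρ : IsConvexModular ρ) {s : ℕ → X} {w : X}
    (hw : Tendsto (fun j => ρ (s j - w)) atTop (𝓝 0)) : IsRhoClosed ρ (insert w (range s)) := by
  intro v hv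
  rw [image_insert_eq, insert_eq, closure_union, closure_singleton, ← range_comp] at hv
  rcases hv with hwv | hv
  · exact .inl (sub_eq_zero.1 ((hρ.zero_iff _).1 hwv.symm)).symm
  obtain ⟨j, hj⟩ | hcl := exists_eq_or_mapClusterPt_of_mem_closure_range hv
  · exact .inr ⟨j, sub_eq_zero.1 ((hρ.zero_iff _).1 hj)⟩
  · exact .inl (hρ.eq_of_mapClusterPt_of_tendsto hcl hw)

theorem exists_strictMono_isRhoClosed (hρ : IsConvexModular ρ) (z : ℕ → X) :
    ∃ ψ : ℕ → ℕ, StrictMono ψ ∧ ∃ C, IsRhoClosed ρ C ∧ (∀ j, z (ψ j) ∈ C) ∧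
      ∀ c ∈ C, (0 : ℝ≥0∞) ∈ closure (range fun k => ρ (z k - c)) := by
  have hself : ∀ k, (0 : ℝ≥0∞) ∈ closure (range fun k' => ρ (z k' - z k)) := fun k =>
    subset_closure ⟨k, by simp only [sub_self, (hρ.zero_iff 0).2 rfl]⟩
  by_cases hcl : ∃ w, MapClusterPt 0 atTop fun k => ρ (z k - w)
  · obtain ⟨w, hw⟩ := hcl
    obtain ⟨ψ, hψ, hψw⟩ := hw.tendsto_subseq
    refine ⟨ψ, hψ, insert w (range (z ∘ ψ)), isRhoClosed_insert_range hρ hψw,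
      fun j => .inr ⟨j, rfl⟩, ?_⟩
    rintro c (rfl | ⟨j, rfl⟩)
    · exact closure_mono (image_subset_range _ _) (mapClusterPt_atTop_iff_forall_mem_closure.1 hw 0)
    · exact hself (ψ j)
  · push Not at hcl
    refine ⟨id, strictMono_id, range z, isRhoClosed_range hρ hcl, fun j => ⟨j, rfl⟩, ?_⟩
    rintro c ⟨k, rfl⟩
    exact hself k

end Modular

/-- A sequence in `X_ρ` `ρ`-converges to `x ∈ X_ρ` iff it converges to `x` in the
modular topology `τ_ρ`. -/
theorem rho_convergence_iff_tauRho_convergence {X : Type*} [AddCommGroup X] [Module ℝ X]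
    (ρ : X → ℝ≥0∞) (hρ : IsConvexModular ρ)
    (x : ℕ → X) (hx : ∀ n, x n ∈ modularSet ρ) (y : X) (hy : y ∈ modularSet ρ) :
    Tendsto (fun n => ρ (x n - y)) atTop (nhds 0) ↔
      ∀ U : Set X, IsTauRhoOpen ρ U → y ∈ U → ∃ n₀ : ℕ, ∀ n ≥ n₀, x n ∈ U := by
  constructor
  · intro h U hU hyU
    obtain ⟨ε, hε, hball⟩ := hU.2 y hyU
    exact eventually_atTop.1 <| (h.eventually (gt_mem_nhds (ENNReal.ofReal_pos.2 hε))).mono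
      fun n hn => hball ⟨hx n, hn⟩
  · contrapose!
    intro h
    obtain ⟨φ, hφ, hyφ⟩ := exists_strictMono_notMem_closure_range h
    obtain ⟨ψ, hψ, C, hC, hψC, hCy⟩ := exists_strictMono_isRhoClosed hρ (x ∘ φ)
    refine ⟨modularSet ρ \ C, hC.isTauRhoOpen_modularSet_diff, ⟨hy, fun hyC => hyφ (hCy y hyC)⟩,
      fun n₀ => ⟨φ (ψ n₀), (hφ.comp hψ).id_le n₀, fun hn => hn.2 (hψC n₀)⟩⟩
end

section
/- Let ρ be a convex modular on a real vector space X. If A is a vector subspace of X_ρ, then the τ_ρ-closure of A is a vector subspace of X_ρ. -/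
open Filter Topology ENNReal

/-- A set `C ⊆ X_ρ` is `τ_ρ`-closed if its complement in `X_ρ` is `τ_ρ`-open. -/
def IsTauRhoClosed {X : Type*} [AddCommGroup X] [Module ℝ X] (ρ : X → ℝ≥0∞) (C : Set X) : Prop :=
  C ⊆ modularSet ρ ∧ IsTauRhoOpen ρ (modularSet ρ \ C)

/-- The `τ_ρ`-closure of `A`: intersection of all `τ_ρ`-closed sets containing `A`. -/
def tauRhoClosure {X : Type*} [AddCommGroup X] [Module ℝ X] (ρ : X → ℝ≥0∞) (A : Set X) : Set X :=
  ⋂₀ {C : Set X | A ⊆ C ∧ IsTauRhoClosed ρ C}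

section Aux
variable {X : Type*} [AddCommGroup X] [Module ℝ X] {ρ : X → ℝ≥0∞}

lemma IsConvexModular.rho_zero (hρ : IsConvexModular ρ) : ρ 0 = 0 := (hρ.zero_iff 0).2 rfl

lemma IsConvexModular.smul_le (hρ : IsConvexModular ρ) {α : ℝ} (h0 : 0 ≤ α) (h1 : α ≤ 1)
    (u : X) : ρ (α • u) ≤ ρ u := by
  have h := hρ.convex α h0 h1 u 0
  simp only [smul_zero, add_zero, hρ.rho_zero, mul_zero] at h
  calc ρ (α • u) ≤ ENNReal.ofReal α * ρ u := h
    _ ≤ 1 * ρ u := by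
        gcongr
        calc ENNReal.ofReal α ≤ ENNReal.ofReal 1 := ENNReal.ofReal_le_ofReal h1
          _ = 1 := ENNReal.ofReal_one
    _ = ρ u := one_mul _

lemma IsConvexModular.smul_le_abs (hρ : IsConvexModular ρ) {c : ℝ} (h : |c| ≤ 1)
    (u : X) : ρ (c • u) ≤ ρ u := by
  rcases le_or_gt 0 c with hc | hc
  · exact hρ.smul_le hc ((le_abs_self c).trans h) u
  · have : ρ (c • u) = ρ ((-c) • u) := by
      rw [neg_smul, hρ.neg_eq]
    rw [this]
    exact hρ.smul_le (by linarith) (by rw [abs_of_neg hc] at h; linarith) u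

lemma IsConvexModular.add_le (hρ : IsConvexModular ρ) (u v : X) :
    ρ ((1/2 : ℝ) • u + (1/2 : ℝ) • v) ≤ ρ u + ρ v := by
  have h := hρ.convex (1/2) (by norm_num) (by norm_num) u v
  have h2 : (1 : ℝ) - 1/2 = 1/2 := by norm_num
  rw [h2] at h
  refine h.trans ?_
  gcongr <;>
  · calc ENNReal.ofReal (1/2) * _ ≤ 1 * _ := by
          gcongr
          calc ENNReal.ofReal (1/2) ≤ ENNReal.ofReal 1 := ENNReal.ofReal_le_ofReal (by norm_num)
            _ = 1 := ENNReal.ofReal_one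
      _ = _ := one_mul _

lemma modularSet_zero (hρ : IsConvexModular ρ) : (0 : X) ∈ modularSet ρ :=
  ⟨1, one_pos, by simp [hρ.rho_zero]⟩

lemma modularSet_add (hρ : IsConvexModular ρ) {u v : X}
    (hu : u ∈ modularSet ρ) (hv : v ∈ modularSet ρ) : u + v ∈ modularSet ρ := by
  obtain ⟨l₁, hl₁, hu⟩ := hu
  obtain ⟨l₂, hl₂, hv⟩ := hv
  refine ⟨min l₁ l₂ / 2, by positivity, ?_⟩
  set l := min l₁ l₂ / 2 with hl
  have hlpos : 0 < l := by positivity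
  have key : l • (u + v) = (1/2 : ℝ) • ((2*l) • u) + (1/2 : ℝ) • ((2*l) • v) := by
    rw [smul_smul, smul_smul, smul_add]; ring_nf
  rw [key]
  refine lt_of_le_of_lt (hρ.add_le _ _) ?_
  have h1 : ρ ((2*l) • u) ≤ ρ (l₁ • u) := by
    have : (2*l) • u = (2*l/l₁) • (l₁ • u) := by
      rw [smul_smul]; congr 1; field_simp
    rw [this]
    exact hρ.smul_le (by positivity) (by rw [div_le_one hl₁]; simp [hl]; linarith [min_le_left l₁ l₂]) _
  have h2 : ρ ((2*l) • v) ≤ ρ (l₂ • v) := by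
    have : (2*l) • v = (2*l/l₂) • (l₂ • v) := by
      rw [smul_smul]; congr 1; field_simp
    rw [this]
    exact hρ.smul_le (by positivity) (by rw [div_le_one hl₂]; simp [hl]; linarith [min_le_right l₁ l₂]) _
  exact ENNReal.add_lt_top.2 ⟨lt_of_le_of_lt h1 hu, lt_of_le_of_lt h2 hv⟩

lemma modularSet_smul (hρ : IsConvexModular ρ) (c : ℝ) {u : X}
    (hu : u ∈ modularSet ρ) : c • u ∈ modularSet ρ := by
  rcases eq_or_ne c 0 with rfl | hc
  · simpa using modularSet_zero hρ
  obtain ⟨l₁, hl₁, hu⟩ := hu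
  refine ⟨l₁ / |c|, by positivity, ?_⟩
  have : (l₁ / |c|) • (c • u) = (l₁ * (c / |c|)) • u := by
    rw [smul_smul]; congr 1; field_simp
  rw [this]
  rcases abs_choice c with h | h
  · rw [h]; rw [div_self hc, mul_one]; exact hu
  · have : l₁ * (c / |c|) = -l₁ := by rw [h]; field_simp
    rw [this, neg_smul, hρ.neg_eq]; exact hu

lemma isTauRhoClosed_modularSet : IsTauRhoClosed ρ (modularSet ρ) := by
  refine ⟨subset_rfl, Set.diff_subset, ?_⟩
  intro x hx
  exact absurd hx.1 hx.2

lemma closed_translate (hρ : IsConvexModular ρ) {C : Set X} (hC : IsTauRhoClosed ρ C)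
    {t : X} (ht : t ∈ modularSet ρ) :
    IsTauRhoClosed ρ {x ∈ modularSet ρ | x + t ∈ C} := by
  refine ⟨fun x hx => hx.1, Set.diff_subset, ?_⟩
  intro x hx
  have hxX : x ∈ modularSet ρ := hx.1
  have hxt : x + t ∉ C := fun h => hx.2 ⟨hxX, h⟩
  have hxtX : x + t ∈ modularSet ρ := modularSet_add hρ hxX ht
  obtain ⟨ε, hε, hball⟩ := hC.2.2 (x + t) ⟨hxtX, hxt⟩
  refine ⟨ε, hε, fun y hy => ?_⟩
  have hyX : y ∈ modularSet ρ := hy.1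
  have hmem : y + t ∈ modularSet ρ \ C := hball ⟨modularSet_add hρ hyX ht, by
    have h' : (y + t) - (x + t) = y - x := by abel
    rw [h']; exact hy.2⟩
  exact ⟨hyX, fun h => hmem.2 h.2⟩

lemma closed_scale (hρ : IsConvexModular ρ) {C : Set X} (hC : IsTauRhoClosed ρ C)
    {c : ℝ} (hc : |c| ≤ 1) :
    IsTauRhoClosed ρ {x ∈ modularSet ρ | c • x ∈ C} := by
  refine ⟨fun x hx => hx.1, Set.diff_subset, ?_⟩
  intro x hx
  have hxX : x ∈ modularSet ρ := hx.1
  have hxc : c • x ∉ C := fun h => hx.2 ⟨hxX, h⟩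
  obtain ⟨ε, hε, hball⟩ := hC.2.2 (c • x) ⟨modularSet_smul hρ c hxX, hxc⟩
  refine ⟨ε, hε, fun y hy => ?_⟩
  have hyX : y ∈ modularSet ρ := hy.1
  have hmem : c • y ∈ modularSet ρ \ C := hball ⟨modularSet_smul hρ c hyX, by
    have h' : c • y - c • x = c • (y - x) := by rw [smul_sub]
    rw [h']
    exact lt_of_le_of_lt (hρ.smul_le_abs hc _) hy.2⟩
  exact ⟨hyX, fun h => hmem.2 h.2⟩

end Aux

/-- If `A` is a vector subspace of `X_ρ`, then the `τ_ρ`-closure of `A` is a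
`τ_ρ`-closed vector subspace of `X_ρ`. -/
theorem tauRhoClosure_of_subspace {X : Type*} [AddCommGroup X] [Module ℝ X]
    (ρ : X → ℝ≥0∞) (hρ : IsConvexModular ρ)
    (A : Set X) (hA : A ⊆ modularSet ρ) (h0 : (0 : X) ∈ A)
    (hadd : ∀ u ∈ A, ∀ v ∈ A, u + v ∈ A)
    (hsmul : ∀ (c : ℝ), ∀ u ∈ A, c • u ∈ A) :
    IsTauRhoClosed ρ (tauRhoClosure ρ A) ∧
    tauRhoClosure ρ A ⊆ modularSet ρ ∧
    (0 : X) ∈ tauRhoClosure ρ A ∧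
    (∀ u ∈ tauRhoClosure ρ A, ∀ v ∈ tauRhoClosure ρ A, u + v ∈ tauRhoClosure ρ A) ∧
    (∀ (c : ℝ), ∀ u ∈ tauRhoClosure ρ A, c • u ∈ tauRhoClosure ρ A) := by
  set S : Set (Set X) := {C | A ⊆ C ∧ IsTauRhoClosed ρ C} with hS
  have hCl : tauRhoClosure ρ A = ⋂₀ S := rfl
  have hXS : modularSet ρ ∈ S := ⟨hA, isTauRhoClosed_modularSet⟩
  have key : ∀ C ∈ S, tauRhoClosure ρ A ⊆ C := fun C hC => Set.sInter_subset_of_mem hC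
  have hClsub : tauRhoClosure ρ A ⊆ modularSet ρ := key _ hXS
  have hACl : A ⊆ tauRhoClosure ρ A := Set.subset_sInter fun C hC => hC.1
  have hClclosed : IsTauRhoClosed ρ (tauRhoClosure ρ A) := by
    refine ⟨hClsub, Set.diff_subset, ?_⟩
    intro x hx
    obtain ⟨C, hCS, hxC⟩ : ∃ C ∈ S, x ∉ C := by
      by_contra h
      push_neg at h
      exact hx.2 (Set.mem_sInter.2 h)
    obtain ⟨ε, hε, hball⟩ := hCS.2.2.2 x ⟨hx.1, hxC⟩
    exact ⟨ε, hε, hball.trans (Set.diff_subset_diff_right (key C hCS))⟩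
  have step1 : ∀ u ∈ tauRhoClosure ρ A, ∀ a ∈ A, u + a ∈ tauRhoClosure ρ A := by
    intro u hu a ha
    rw [hCl]
    refine Set.mem_sInter.2 fun C hC => ?_
    have hD : {x ∈ modularSet ρ | x + a ∈ C} ∈ S :=
      ⟨fun x hx => ⟨hA hx, hC.1 (hadd x hx a ha)⟩, closed_translate hρ hC.2 (hA ha)⟩
    exact (key _ hD hu).2
  have step2 : ∀ u ∈ tauRhoClosure ρ A, ∀ v ∈ tauRhoClosure ρ A, u + v ∈ tauRhoClosure ρ A := by
    intro u hu v hv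
    have hD : {x ∈ modularSet ρ | x + u ∈ tauRhoClosure ρ A} ∈ S :=
      ⟨fun a ha => ⟨hA ha, by rw [add_comm]; exact step1 u hu a ha⟩,
       closed_translate hρ hClclosed (hClsub hu)⟩
    have h' := (key _ hD hv).2
    rwa [add_comm] at h'
  have ssmall : ∀ c : ℝ, |c| ≤ 1 → ∀ u ∈ tauRhoClosure ρ A, c • u ∈ tauRhoClosure ρ A := by
    intro c hc u hu
    have hD : {x ∈ modularSet ρ | c • x ∈ tauRhoClosure ρ A} ∈ S :=
      ⟨fun a ha => ⟨hA ha, hACl (hsmul c a ha)⟩, closed_scale hρ hClclosed hc⟩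
    exact (key _ hD hu).2
  have natsmul : ∀ n : ℕ, ∀ u ∈ tauRhoClosure ρ A, (n : ℝ) • u ∈ tauRhoClosure ρ A := by
    intro n
    induction n with
    | zero => intro u hu; simpa using hACl h0
    | succ k ih =>
      intro u hu
      have h' : ((k+1 : ℕ) : ℝ) • u = (k : ℝ) • u + u := by
        push_cast; rw [add_smul, one_smul]
      rw [h']
      exact step2 _ (ih u hu) u hu
  have sgen : ∀ c : ℝ, ∀ u ∈ tauRhoClosure ρ A, c • u ∈ tauRhoClosure ρ A := by
    intro c u hu
    set n : ℕ := ⌈|c|⌉₊ + 1 with hn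
    have hnpos : (0 : ℝ) < (n : ℝ) := Nat.cast_pos.2 (Nat.succ_pos _)
    have habs : |c / (n : ℝ)| ≤ 1 := by
      rw [abs_div, abs_of_pos hnpos, div_le_one hnpos]
      calc |c| ≤ (⌈|c|⌉₊ : ℝ) := Nat.le_ceil _
        _ ≤ (n : ℝ) := by rw [hn]; push_cast; linarith
    have h1 := ssmall _ habs u hu
    have h2 := natsmul n _ h1
    have h3 : (n : ℝ) • (c / (n : ℝ)) • u = c • u := by
      rw [smul_smul]; congr 1; field_simp
    rwa [h3] at h2
  exact ⟨hClclosed, hClsub, hACl h0, step2, sgen⟩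
end

section
/- Let ρ be a left-continuous convex modular on a real vector space X. The following are equivalent: (a) ρ satisfies the Δ₂-property; (b) for every sequence (x_n) ⊆ X_ρ and x ∈ X_ρ, ρ(x_n − x) → 0 if and only if ‖x_n − x‖_ρ → 0; (c) a set A ⊆ X_ρ is τ_ρ-open if and only if it is open with respect to the Luxemburg norm ‖·‖_ρ. -/
open Filter Topology ENNReal

/-- `ρ` is left-continuous. -/
def IsLeftContinuousModular {X : Type*} [AddCommGroup X] [Module ℝ X] (ρ : X → ℝ≥0∞) : Prop :=
  ∀ (u : X) (l₀ : ℝ), 0 < l₀ →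
    Tendsto (fun l : ℝ => ρ (l • u)) (nhdsWithin l₀ (Set.Iio l₀)) (nhds (ρ (l₀ • u)))

/-- The Luxemburg norm `‖x‖_ρ := inf {λ > 0 : ρ(x/λ) ≤ 1}`. -/
noncomputable def luxNorm {X : Type*} [AddCommGroup X] [Module ℝ X] (ρ : X → ℝ≥0∞) (x : X) : ℝ :=
  sInf {l : ℝ | 0 < l ∧ ρ (l⁻¹ • x) ≤ 1}

/-- The `Δ₂`-property of a modular. -/
def Delta2 {X : Type*} [AddCommGroup X] [Module ℝ X] (ρ : X → ℝ≥0∞) : Prop :=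
  ∀ x : ℕ → X, Tendsto (fun j => ρ (x j)) atTop (nhds 0) →
    Tendsto (fun j => ρ ((2 : ℝ) • x j)) atTop (nhds 0)

/-!
All three conditions are equivalent to the uniform condition that on `X_ρ`, for every `r > 0`,
`ρ y < ε` forces `‖y‖_ρ < r` for some `ε > 0`. The reverse implication always holds, since
convexity gives `ρ (c • y) ≤ c * r` whenever `‖y‖_ρ < r` and `c * r ≤ 1`. Iterating `Δ₂` gives
`ρ (2 ^ k • y_n) → 0`, hence `‖y_n‖_ρ ≤ 2⁻ᵏ` eventually; conversely the uniform condition makes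
`‖x_n‖_ρ → 0` whenever `ρ (x_n) → 0`, and then `ρ (2 • x_n) → 0` by the bound above with `c = 2`.
For the topologies, the uniform condition says exactly that Luxemburg balls, which are norm-open
by the triangle inequality, are `τ_ρ`-open.
-/

section

variable {X : Type*} [AddCommGroup X] [Module ℝ X] {ρ : X → ℝ≥0∞}

theorem luxNorm_nonneg (ρ : X → ℝ≥0∞) (x : X) : 0 ≤ luxNorm ρ x :=
  Real.sInf_nonneg fun _ hl => hl.1.le

theorem luxNorm_le {x : X} {c : ℝ} (hc : 0 < c) (h : ρ (c⁻¹ • x) ≤ 1) : luxNorm ρ x ≤ c :=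
  csInf_le ⟨0, fun _ hl => hl.1.le⟩ ⟨hc, h⟩

theorem tendsto_luxNorm_of_eventually_lt {ι : Type*} {l : Filter ι} {z : ι → X}
    (h : ∀ r : ℝ, 0 < r → ∀ᶠ i in l, luxNorm ρ (z i) < r) :
    Tendsto (fun i => luxNorm ρ (z i)) l (𝓝 0) :=
  tendsto_order.2 ⟨fun _ ha => Eventually.of_forall fun _ => ha.trans_le (luxNorm_nonneg ρ _), h⟩

theorem mem_modularSet_of_lt_top {x : X} (h : ρ x < ⊤) : x ∈ modularSet ρ :=
  ⟨1, one_pos, by rwa [one_smul]⟩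

namespace IsConvexModular

theorem map_zero (hρ : IsConvexModular ρ) : ρ 0 = 0 :=
  (hρ.zero_iff 0).2 rfl

theorem smul_le_s10 (hρ : IsConvexModular ρ) {s : ℝ} (hs₀ : 0 ≤ s) (hs₁ : s ≤ 1) (u : X) :
    ρ (s • u) ≤ ENNReal.ofReal s * ρ u := by
  simpa [hρ.map_zero] using hρ.convex s hs₀ hs₁ u 0

theorem smul_le_smul (hρ : IsConvexModular ρ) {s t : ℝ} (hs : 0 ≤ s) (hst : s ≤ t) (u : X) :
    ρ (s • u) ≤ ρ (t • u) := by
  rcases hs.eq_or_lt with rfl | hs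
  · simp [hρ.map_zero]
  have ht : 0 < t := hs.trans_le hst
  have hst' : s / t ≤ 1 := (div_le_one ht).2 hst
  calc ρ (s • u) = ρ ((s / t) • t • u) := by rw [smul_smul, div_mul_cancel₀ _ ht.ne']
    _ ≤ ENNReal.ofReal (s / t) * ρ (t • u) := hρ.smul_le_s10 (by positivity) hst' _
    _ ≤ ρ (t • u) := mul_le_of_le_one_left' (ENNReal.ofReal_le_one.2 hst')

theorem zero_mem_modularSet (hρ : IsConvexModular ρ) : (0 : X) ∈ modularSet ρ :=
  mem_modularSet_of_lt_top (by simp [hρ.map_zero])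

theorem sub_mem_modularSet (hρ : IsConvexModular ρ) {x y : X} (hx : x ∈ modularSet ρ)
    (hy : y ∈ modularSet ρ) : x - y ∈ modularSet ρ := by
  obtain ⟨a, ha, hax⟩ := hx
  obtain ⟨b, hb, hby⟩ := hy
  set l := min a b
  have hx' : ρ (l • x) < ⊤ := (hρ.smul_le_smul (by positivity) (min_le_left a b) x).trans_lt hax
  have hy' : ρ (-(l • y)) < ⊤ := by
    rw [hρ.neg_eq]
    exact (hρ.smul_le_smul (by positivity) (min_le_right a b) y).trans_lt hby
  refine ⟨l / 2, by positivity, ?_⟩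
  have h := hρ.convex (1 / 2) (by norm_num) (by norm_num) (l • x) (-(l • y))
  rw [show (1 / 2 : ℝ) • l • x + (1 - 1 / 2 : ℝ) • -(l • y) = (l / 2) • (x - y) by module] at h
  exact h.trans_lt (by finiteness)

theorem exists_inv_smul_le_one (hρ : IsConvexModular ρ) {x : X} (hx : x ∈ modularSet ρ) :
    ∃ a : ℝ, 0 < a ∧ ρ (a⁻¹ • x) ≤ 1 := by
  obtain ⟨l, hl, hlx⟩ := hx
  obtain ⟨n, hn⟩ := ENNReal.exists_nat_gt hlx.ne
  have hn₀ : (0 : ℝ) < n := by exact_mod_cast zero_le.trans_lt hn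
  refine ⟨((n : ℝ)⁻¹ * l)⁻¹, by positivity, ?_⟩
  calc ρ (((n : ℝ)⁻¹ * l)⁻¹⁻¹ • x) = ρ ((n : ℝ)⁻¹ • l • x) := by rw [inv_inv, mul_smul]
    _ ≤ ENNReal.ofReal (n : ℝ)⁻¹ * ρ (l • x) :=
        hρ.smul_le_s10 (by positivity) (inv_le_one_of_one_le₀ (by exact_mod_cast hn₀)) _
    _ ≤ (n : ℝ≥0∞)⁻¹ * n := by
        rw [ENNReal.ofReal_inv_of_pos hn₀, ENNReal.ofReal_natCast]
        gcongr
    _ = 1 := ENNReal.inv_mul_cancel (by exact_mod_cast hn₀.ne') (ENNReal.natCast_ne_top n)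

theorem exists_lt_of_luxNorm_lt (hρ : IsConvexModular ρ) {x : X} (hx : x ∈ modularSet ρ)
    {r : ℝ} (h : luxNorm ρ x < r) : ∃ a : ℝ, 0 < a ∧ a < r ∧ ρ (a⁻¹ • x) ≤ 1 := by
  obtain ⟨a, ⟨ha, hax⟩, har⟩ := exists_lt_of_csInf_lt (hρ.exists_inv_smul_le_one hx) h
  exact ⟨a, ha, har, hax⟩

theorem smul_le_of_luxNorm_lt (hρ : IsConvexModular ρ) {x : X} (hx : x ∈ modularSet ρ)
    {c r : ℝ} (hc : 0 < c) (h : luxNorm ρ x < r) (hcr : c * r ≤ 1) :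
    ρ (c • x) ≤ ENNReal.ofReal (c * r) := by
  obtain ⟨a, ha, har, hax⟩ := hρ.exists_lt_of_luxNorm_lt hx h
  have hca : c * a ≤ c * r := by gcongr
  calc ρ (c • x) = ρ ((c * a) • a⁻¹ • x) := by
        rw [smul_smul, mul_assoc, mul_inv_cancel₀ ha.ne', mul_one]
    _ ≤ ENNReal.ofReal (c * a) * ρ (a⁻¹ • x) := hρ.smul_le_s10 (by positivity) (hca.trans hcr) _
    _ ≤ ENNReal.ofReal (c * r) := by
        grw [hax, mul_one]
        exact ENNReal.ofReal_le_ofReal hca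

theorem inv_smul_add_le_one (hρ : IsConvexModular ρ) {x y : X} {a b : ℝ} (ha : 0 < a)
    (hb : 0 < b) (hx : ρ (a⁻¹ • x) ≤ 1) (hy : ρ (b⁻¹ • y) ≤ 1) :
    ρ ((a + b)⁻¹ • (x + y)) ≤ 1 := by
  set α := a / (a + b)
  have hα₀ : 0 ≤ α := by positivity
  have hα₁ : α ≤ 1 := (div_le_one (by positivity)).2 (by linarith)
  have h := hρ.convex α hα₀ hα₁ (a⁻¹ • x) (b⁻¹ • y)
  rw [show α • a⁻¹ • x + (1 - α) • b⁻¹ • y = (a + b)⁻¹ • (x + y) by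
    simp only [α]
    rw [one_sub_div (by positivity), add_sub_cancel_left, smul_smul, smul_smul, smul_add]
    congr 2 <;> field_simp] at h
  calc _ ≤ _ := h
    _ ≤ ENNReal.ofReal α * 1 + ENNReal.ofReal (1 - α) * 1 := by gcongr
    _ = 1 := by rw [mul_one, mul_one, ← ENNReal.ofReal_add hα₀ (by linarith)]; simp

theorem luxNorm_add_le (hρ : IsConvexModular ρ) {x y : X} (hx : x ∈ modularSet ρ)
    (hy : y ∈ modularSet ρ) : luxNorm ρ (x + y) ≤ luxNorm ρ x + luxNorm ρ y := by
  refine le_of_forall_pos_lt_add fun ε hε => ?_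
  obtain ⟨a, ha, hax, hρa⟩ := hρ.exists_lt_of_luxNorm_lt hx (lt_add_of_pos_right _ (half_pos hε))
  obtain ⟨b, hb, hby, hρb⟩ := hρ.exists_lt_of_luxNorm_lt hy (lt_add_of_pos_right _ (half_pos hε))
  calc luxNorm ρ (x + y) ≤ a + b :=
        luxNorm_le (by positivity) (hρ.inv_smul_add_le_one ha hb hρa hρb)
    _ < luxNorm ρ x + luxNorm ρ y + ε := by linarith

theorem luxNorm_zero (hρ : IsConvexModular ρ) : luxNorm ρ (0 : X) = 0 := by
  have hset : {l : ℝ | 0 < l ∧ ρ (l⁻¹ • (0 : X)) ≤ 1} = Set.Ioi 0 := by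
    ext l
    simp [hρ.map_zero]
  rw [luxNorm, hset, csInf_Ioi]

theorem tendsto_smul_of_tendsto_luxNorm (hρ : IsConvexModular ρ) {ι : Type*} {l : Filter ι}
    {z : ι → X} (hz : ∀ᶠ i in l, z i ∈ modularSet ρ)
    (h : Tendsto (fun i => luxNorm ρ (z i)) l (𝓝 0)) {c : ℝ} (hc : 0 < c) :
    Tendsto (fun i => ρ (c • z i)) l (𝓝 0) := by
  refine ENNReal.tendsto_nhds_zero.2 fun ε hε => ?_
  obtain ⟨δ, hδ₀, hδ, hδε⟩ := ENNReal.lt_iff_exists_real_btwn.1 (lt_min hε zero_lt_one)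
  have hδ₁ : δ ≤ 1 := (ENNReal.ofReal_lt_one.1 (hδε.trans_le (min_le_right _ _))).le
  have hcδ : c * (δ / c) = δ := mul_div_cancel₀ _ hc.ne'
  filter_upwards [hz, h.eventually_lt_const (div_pos (ENNReal.ofReal_pos.1 hδ) hc)] with i hi hlt
  calc ρ (c • z i) ≤ ENNReal.ofReal (c * (δ / c)) :=
        hρ.smul_le_of_luxNorm_lt hi hc hlt (hcδ.trans_le hδ₁)
    _ ≤ ε := by rw [hcδ]; exact (hδε.trans_le (min_le_left _ _)).le

theorem exists_luxNorm_ball_subset (hρ : IsConvexModular ρ) {A : Set X} (hA : IsTauRhoOpen ρ A)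
    {x : X} (hx : x ∈ A) :
    ∃ r : ℝ, 0 < r ∧ {y ∈ modularSet ρ | luxNorm ρ (y - x) < r} ⊆ A := by
  obtain ⟨ε, hε, hεA⟩ := hA.2 x hx
  refine ⟨min (ε / 2) 1, by positivity, fun y ⟨hy, hyx⟩ => hεA ⟨hy, ?_⟩⟩
  calc ρ (y - x) = ρ ((1 : ℝ) • (y - x)) := by rw [one_smul]
    _ ≤ ENNReal.ofReal (1 * min (ε / 2) 1) :=
        hρ.smul_le_of_luxNorm_lt (hρ.sub_mem_modularSet hy (hA.1 hx)) one_pos hyx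
          (by rw [one_mul]; exact min_le_right _ _)
    _ < ENNReal.ofReal ε :=
        (ENNReal.ofReal_lt_ofReal_iff hε).2 (by rw [one_mul]; linarith [min_le_left (ε / 2) 1])

end IsConvexModular

theorem Delta2.tendsto_pow_smul (hd : Delta2 ρ) {z : ℕ → X}
    (h : Tendsto (fun n => ρ (z n)) atTop (𝓝 0)) (k : ℕ) :
    Tendsto (fun n => ρ ((2 : ℝ) ^ k • z n)) atTop (𝓝 0) := by
  induction k with
  | zero => simpa using h
  | succ k ih => simpa only [pow_succ', mul_smul] using hd _ ih

theorem Delta2.tendsto_luxNorm (hd : Delta2 ρ) {z : ℕ → X}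
    (h : Tendsto (fun n => ρ (z n)) atTop (𝓝 0)) :
    Tendsto (fun n => luxNorm ρ (z n)) atTop (𝓝 0) := by
  refine tendsto_luxNorm_of_eventually_lt fun r hr => ?_
  obtain ⟨k, hk⟩ := exists_pow_lt_of_lt_one hr (by norm_num : (2⁻¹ : ℝ) < 1)
  filter_upwards [(hd.tendsto_pow_smul h k).eventually_lt_const zero_lt_one] with n hn
  refine (luxNorm_le (by positivity) ?_).trans_lt hk
  rw [inv_pow, inv_inv]
  exact hn.le

theorem exists_pos_forall_luxNorm_lt_of_tendsto
    (h : ∀ z : ℕ → X, (∀ n, z n ∈ modularSet ρ) → Tendsto (fun n => ρ (z n)) atTop (𝓝 0) →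
      Tendsto (fun n => luxNorm ρ (z n)) atTop (𝓝 0))
    {r : ℝ} (hr : 0 < r) :
    ∃ ε : ℝ, 0 < ε ∧ ∀ y ∈ modularSet ρ, ρ y < ENNReal.ofReal ε → luxNorm ρ y < r := by
  by_contra! hcon
  choose z hz hzρ hzr using fun n : ℕ => hcon (1 / (n + 1)) Nat.one_div_pos_of_nat
  have hρz : Tendsto (fun n => ρ (z n)) atTop (𝓝 0) :=
    tendsto_of_tendsto_of_tendsto_of_le_of_le tendsto_const_nhds
      (by simpa using ENNReal.tendsto_ofReal tendsto_one_div_add_atTop_nhds_zero_nat)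
      (fun _ => zero_le) fun n => (hzρ n).le
  obtain ⟨n, hn⟩ := ((h z hz hρz).eventually_lt_const hr).exists
  exact (hzr n).not_gt hn

theorem IsConvexModular.delta2_of_forall_exists_pos (hρ : IsConvexModular ρ)
    (h : ∀ r : ℝ, 0 < r →
      ∃ ε : ℝ, 0 < ε ∧ ∀ y ∈ modularSet ρ, ρ y < ENNReal.ofReal ε → luxNorm ρ y < r) :
    Delta2 ρ := by
  intro x hx
  have hmem : ∀ᶠ n in atTop, x n ∈ modularSet ρ :=
    (hx.eventually_lt_const ENNReal.zero_lt_top).mono fun _ => mem_modularSet_of_lt_top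
  refine hρ.tendsto_smul_of_tendsto_luxNorm hmem (tendsto_luxNorm_of_eventually_lt fun r hr => ?_)
    two_pos
  obtain ⟨ε, hε, hεr⟩ := h r hr
  filter_upwards [hmem, hx.eventually_lt_const (ENNReal.ofReal_pos.2 hε)] with n hn hnε
  exact hεr _ hn hnε

theorem IsConvexModular.delta2_tfae (hρ : IsConvexModular ρ) :
    List.TFAE [Delta2 ρ,
      ∀ z : ℕ → X, (∀ n, z n ∈ modularSet ρ) → Tendsto (fun n => ρ (z n)) atTop (𝓝 0) →
        Tendsto (fun n => luxNorm ρ (z n)) atTop (𝓝 0),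
      ∀ r : ℝ, 0 < r →
        ∃ ε : ℝ, 0 < ε ∧ ∀ y ∈ modularSet ρ, ρ y < ENNReal.ofReal ε → luxNorm ρ y < r] := by
  tfae_have 1 → 2 := fun hd _ _ => hd.tendsto_luxNorm
  tfae_have 2 → 3 := fun h _ => exists_pos_forall_luxNorm_lt_of_tendsto h
  tfae_have 3 → 1 := hρ.delta2_of_forall_exists_pos
  tfae_finish

theorem IsConvexModular.forall_tendsto_sub_iff (hρ : IsConvexModular ρ) :
    (∀ x : ℕ → X, (∀ n, x n ∈ modularSet ρ) → ∀ y ∈ modularSet ρ,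
      (Tendsto (fun n => ρ (x n - y)) atTop (𝓝 0) ↔
        Tendsto (fun n => luxNorm ρ (x n - y)) atTop (𝓝 0))) ↔
    ∀ z : ℕ → X, (∀ n, z n ∈ modularSet ρ) → Tendsto (fun n => ρ (z n)) atTop (𝓝 0) →
      Tendsto (fun n => luxNorm ρ (z n)) atTop (𝓝 0) := by
  refine ⟨fun h z hz hρz => ?_, fun h x hx y hy => ?_⟩
  · simpa using (h z hz 0 hρ.zero_mem_modularSet).1 (by simpa using hρz)
  have hxy : ∀ n, x n - y ∈ modularSet ρ := fun n => hρ.sub_mem_modularSet (hx n) hy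
  refine ⟨h _ hxy, fun hlux => ?_⟩
  simpa using hρ.tendsto_smul_of_tendsto_luxNorm (Eventually.of_forall hxy) hlux one_pos

theorem IsConvexModular.forall_isTauRhoOpen_iff (hρ : IsConvexModular ρ) :
    (∀ A : Set X, A ⊆ modularSet ρ →
      (IsTauRhoOpen ρ A ↔
        ∀ x ∈ A, ∃ r : ℝ, 0 < r ∧ {y ∈ modularSet ρ | luxNorm ρ (y - x) < r} ⊆ A)) ↔
    ∀ r : ℝ, 0 < r →
      ∃ ε : ℝ, 0 < ε ∧ ∀ y ∈ modularSet ρ, ρ y < ENNReal.ofReal ε → luxNorm ρ y < r := by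
  refine ⟨fun h r hr => ?_, fun h A hA => ⟨fun hAρ _ => hρ.exists_luxNorm_ball_subset hAρ, ?_⟩⟩
  · set B := {y ∈ modularSet ρ | luxNorm ρ y < r}
    have hB : IsTauRhoOpen ρ B := by
      refine (h B fun _ hy => hy.1).2 fun x ⟨hx, hxr⟩ =>
        ⟨r - luxNorm ρ x, sub_pos.2 hxr, fun y ⟨hy, hyx⟩ => ⟨hy, ?_⟩⟩
      have := hρ.luxNorm_add_le (hρ.sub_mem_modularSet hy hx) hx
      rw [sub_add_cancel] at this
      linarith
    obtain ⟨ε, hε, hεB⟩ := hB.2 0 ⟨hρ.zero_mem_modularSet, by rwa [hρ.luxNorm_zero]⟩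
    exact ⟨ε, hε, fun y hy hyε => (hεB ⟨hy, by rwa [sub_zero]⟩).2⟩
  · refine fun hball => ⟨hA, fun x hx => ?_⟩
    obtain ⟨r, hr, hrA⟩ := hball x hx
    obtain ⟨ε, hε, hεr⟩ := h r hr
    exact ⟨ε, hε, fun y ⟨hy, hyε⟩ => hrA ⟨hy, hεr _ (hρ.sub_mem_modularSet hy (hA hx)) hyε⟩⟩

end

theorem delta2_iff_rho_eq_norm_convergence_iff_topologies_agree_general
    {X : Type*} [AddCommGroup X] [Module ℝ X]
    (ρ : X → ℝ≥0∞) (hρ : IsConvexModular ρ) :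
    (Delta2 ρ ↔
      ∀ x : ℕ → X, (∀ n, x n ∈ modularSet ρ) → ∀ y ∈ modularSet ρ,
        (Tendsto (fun n => ρ (x n - y)) atTop (nhds 0) ↔
          Tendsto (fun n => luxNorm ρ (x n - y)) atTop (nhds 0))) ∧
    (Delta2 ρ ↔
      ∀ A : Set X, A ⊆ modularSet ρ →
        (IsTauRhoOpen ρ A ↔
          ∀ x ∈ A, ∃ r : ℝ, 0 < r ∧ {y ∈ modularSet ρ | luxNorm ρ (y - x) < r} ⊆ A)) :=
  ⟨(hρ.delta2_tfae.out 0 1).trans hρ.forall_tendsto_sub_iff.symm,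
    (hρ.delta2_tfae.out 0 2).trans hρ.forall_isTauRhoOpen_iff.symm⟩

/-- The `Δ₂`-property is equivalent to: (b) `ρ`-convergence coincides with Luxemburg-norm
convergence on `X_ρ`; and to (c) the modular topology `τ_ρ` coincides with the Luxemburg
norm topology on `X_ρ`. -/
theorem delta2_iff_rho_eq_norm_convergence_iff_topologies_agree
    {X : Type*} [AddCommGroup X] [Module ℝ X]
    (ρ : X → ℝ≥0∞) (hρ : IsConvexModular ρ) (hlc : IsLeftContinuousModular ρ) :
    (Delta2 ρ ↔
      ∀ x : ℕ → X, (∀ n, x n ∈ modularSet ρ) → ∀ y ∈ modularSet ρ,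
        (Tendsto (fun n => ρ (x n - y)) atTop (nhds 0) ↔
          Tendsto (fun n => luxNorm ρ (x n - y)) atTop (nhds 0))) ∧
    (Delta2 ρ ↔
      ∀ A : Set X, A ⊆ modularSet ρ →
        (IsTauRhoOpen ρ A ↔
          ∀ x ∈ A, ∃ r : ℝ, 0 < r ∧ {y ∈ modularSet ρ | luxNorm ρ (y - x) < r} ⊆ A)) :=
  delta2_iff_rho_eq_norm_convergence_iff_topologies_agree_general ρ hρ
end

section
/- Let p = (p_j) be a sequence with p_j ∈ (1,∞) for all j. The following are equivalent: (i) ρ_p is right-continuous on ℓ^{(p_n)}, i.e., for every a ∈ ℓ^{(p_n)} and λ₀ > 0, ρ_p(λa) → ρ_p(λ₀a) as λ → λ₀ from the right; (ii) sup_j p_j < ∞; (iii) ρ_p satisfies the Δ₂-property, i.e., for every sequence (x_k) of elements of ℝ^ℕ, ρ_p(x_k) → 0 implies ρ_p(2x_k) → 0. -/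
/-!
If `p_j ≤ M` for all `j`, then `ρ_p(c • a) ≤ c ^ M * ρ_p(a)` for `c ≥ 1`. This gives the
`Δ₂`-property at once, and right continuity at `λ₀` by squeezing `ρ_p(λ • a)` between
`ρ_p(λ₀ • a)` and `(λ / λ₀) ^ M * ρ_p(λ₀ • a)`.

If `p` is unbounded, extract indices `j_k` with `p_{j_k} > k ^ 2`. For `c > 1` the elements
`c⁻¹ • e_{j_k}` have modular `c ^ (-p_{j_k}) → 0`, while their multiples by `c` have modular `1`,
so `Δ₂` fails.
The element `a` with `|a_{j_k}| ^ p_{j_k} = 2⁻ᵏ` (and zero elsewhere) has finite modular, but for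
`λ > 1` the terms `λ ^ p_{j_k} * 2⁻ᵏ ≥ (λ ^ k / 2) ^ k` of `ρ_p(λ • a)` do not tend to `0`, so
`ρ_p(λ • a) = ∞` for every `λ > 1`, and right continuity fails at `λ₀ = 1`.
-/

open Filter Topology ENNReal

/-- The Nakano modular `ρ_p((a_j)) = Σ_j |a_j|^{p_j}` on `ℝ^ℕ`. -/
noncomputable def seqModular (p : ℕ → ℝ) (a : ℕ → ℝ) : ℝ≥0∞ :=
  ∑' j, ENNReal.ofReal (|a j| ^ p j)

section
variable {p : ℕ → ℝ}

lemma seqModular_smul_mono (hp : ∀ j, 0 ≤ p j) (a : ℕ → ℝ) {c d : ℝ} (hc : 0 ≤ c)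
    (hcd : c ≤ d) : seqModular p (c • a) ≤ seqModular p (d • a) := by
  refine ENNReal.tsum_le_tsum fun j => ENNReal.ofReal_le_ofReal ?_
  simp only [Pi.smul_apply, smul_eq_mul, abs_mul]
  gcongr
  exact hp j

lemma seqModular_smul_le {M : ℝ} (hM : ∀ j, p j ≤ M) (a : ℕ → ℝ) {c : ℝ} (hc : 1 ≤ c) :
    seqModular p (c • a) ≤ ENNReal.ofReal (c ^ M) * seqModular p a := by
  have hc0 : 0 ≤ c := zero_le_one.trans hc
  rw [seqModular, seqModular, ← ENNReal.tsum_mul_left]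
  refine ENNReal.tsum_le_tsum fun j => ?_
  rw [← ENNReal.ofReal_mul (by positivity), Pi.smul_apply, smul_eq_mul, abs_mul,
    abs_of_nonneg hc0, Real.mul_rpow hc0 (abs_nonneg _)]
  gcongr
  exact hM j

lemma tendsto_seqModular_smul_zero {ι : Type*} {l : Filter ι} {M : ℝ} (hM : ∀ j, p j ≤ M)
    {c : ℝ} (hc : 1 ≤ c) {x : ι → ℕ → ℝ} (hx : Tendsto (fun k => seqModular p (x k)) l (𝓝 0)) :
    Tendsto (fun k => seqModular p (c • x k)) l (𝓝 0) := by
  have hbound : Tendsto (fun k => ENNReal.ofReal (c ^ M) * seqModular p (x k)) l (𝓝 0) := by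
    simpa using ENNReal.Tendsto.const_mul hx (Or.inr ENNReal.ofReal_ne_top)
  exact tendsto_of_tendsto_of_tendsto_of_le_of_le tendsto_const_nhds hbound
    (fun k => zero_le) fun k => seqModular_smul_le hM (x k) hc

lemma tendsto_seqModular_smul_nhdsGT (hp : ∀ j, 0 ≤ p j) {M : ℝ} (hM : ∀ j, p j ≤ M)
    (a : ℕ → ℝ) {l₀ : ℝ} (hl₀ : 0 < l₀) :
    Tendsto (fun l : ℝ => seqModular p (l • a)) (𝓝[>] l₀) (𝓝 (seqModular p (l₀ • a))) := by
  have hratio : Tendsto (fun l : ℝ => ENNReal.ofReal ((l / l₀) ^ M)) (𝓝[>] l₀) (𝓝 1) := by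
    have : ContinuousAt (fun l : ℝ => (l / l₀) ^ M) l₀ := by
      fun_prop (disch := simp [hl₀.ne'])
    simpa [hl₀.ne', Function.comp_def] using
      (ENNReal.continuous_ofReal.tendsto _).comp (this.tendsto.mono_left nhdsWithin_le_nhds)
  have hupper := ENNReal.Tendsto.mul_const hratio (b := seqModular p (l₀ • a)) (Or.inl one_ne_zero)
  rw [one_mul] at hupper
  refine tendsto_of_tendsto_of_tendsto_of_le_of_le' tendsto_const_nhds hupper ?_ ?_ <;>
    filter_upwards [self_mem_nhdsWithin] with l (hl : l₀ < l)
  · exact seqModular_smul_mono hp a hl₀.le hl.le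
  · have hre : l • a = (l / l₀) • l₀ • a := by rw [smul_smul, div_mul_cancel₀ _ hl₀.ne']
    rw [hre]
    exact seqModular_smul_le hM _ ((one_le_div hl₀).mpr hl.le)

lemma frequently_lt_of_not_bddAbove {f : ℕ → ℝ} (hf : ¬BddAbove (Set.range f)) (M : ℝ) :
    ∃ᶠ j in atTop, M < f j := by
  contrapose! hf
  exact (isBoundedUnder_of_eventually_le (by simpa using hf)).bddAbove_range

lemma seqModular_single (hp : ∀ j, p j ≠ 0) (i : ℕ) (t : ℝ) :
    seqModular p (Pi.single i t) = ENNReal.ofReal (|t| ^ p i) := by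
  rw [seqModular, tsum_eq_single i fun j hj => by simp [hj, Real.zero_rpow (hp j)]]
  simp

lemma seqModular_extend (hp : ∀ j, p j ≠ 0) {φ : ℕ → ℕ} (hφ : φ.Injective) (b : ℕ → ℝ) :
    seqModular p (Function.extend φ b 0) = ∑' k, ENNReal.ofReal (|b k| ^ p (φ k)) := by
  rw [seqModular, ← hφ.tsum_eq]
  · simp [hφ.extend_apply]
  · intro j hj
    by_contra hjφ
    simp [Function.extend_apply' _ _ _ hjφ, Real.zero_rpow (hp j)] at hj

lemma ENNReal.tsum_eq_top_of_frequently_one_le {f : ℕ → ℝ≥0∞} (h : ∃ᶠ k in atTop, 1 ≤ f k) :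
    ∑' k, f k = ⊤ := by
  by_contra hf
  have hlt := (ENNReal.tendsto_atTop_zero_of_tsum_ne_top hf).eventually (gt_mem_nhds one_pos)
  exact h (hlt.mono fun k hk => not_le.mpr hk)

lemma exists_seqModular_lt_top_forall_smul_eq_top (hp : ∀ j, p j ≠ 0)
    (hunb : ¬BddAbove (Set.range p)) :
    ∃ a, seqModular p a < ⊤ ∧ ∀ l : ℝ, 1 < l → seqModular p (l • a) = ⊤ := by
  obtain ⟨φ, hφ, hφp⟩ := extraction_forall_of_frequently fun k : ℕ =>
    frequently_lt_of_not_bddAbove hunb ((k : ℝ) ^ 2)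
  set b : ℕ → ℝ := fun k => (1 / 2 : ℝ) ^ (k / p (φ k))
  have hb : ∀ k, |b k| ^ p (φ k) = (1 / 2) ^ k := fun k => by
    rw [abs_of_nonneg (by positivity), ← Real.rpow_mul (by norm_num),
      div_mul_cancel₀ _ (hp _), Real.rpow_natCast]
  refine ⟨Function.extend φ b 0, ?_, fun l hl => ?_⟩
  · rw [seqModular_extend hp hφ.injective, tsum_congr fun k => congrArg ENNReal.ofReal (hb k),
      ← ENNReal.ofReal_tsum_of_nonneg (fun k => by positivity)
        (summable_geometric_of_lt_one (by norm_num) (by norm_num))]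
    exact ENNReal.ofReal_lt_top
  rw [← Function.extend_smul, smul_zero, seqModular_extend hp hφ.injective]
  refine ENNReal.tsum_eq_top_of_frequently_one_le
    ((tendsto_pow_atTop_atTop_of_one_lt hl).eventually_ge_atTop 2 |>.mono fun k hk => ?_).frequently
  rw [← ENNReal.ofReal_one]
  refine ENNReal.ofReal_le_ofReal ?_
  calc (1 : ℝ) = 2 ^ k * (1 / 2) ^ k := by rw [← mul_pow]; norm_num
    _ ≤ (l ^ k) ^ k * (1 / 2) ^ k := by gcongr
    _ = l ^ ((k : ℝ) ^ 2) * (1 / 2) ^ k := by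
      rw [← pow_mul, ← Real.rpow_natCast]; push_cast; ring_nf
    _ ≤ l ^ p (φ k) * (1 / 2) ^ k := by gcongr; exacts [hl.le, (hφp k).le]
    _ = |(l • b) k| ^ p (φ k) := by
      rw [Pi.smul_apply, smul_eq_mul, abs_mul, abs_of_pos (one_pos.trans hl),
        Real.mul_rpow (one_pos.trans hl).le (abs_nonneg _), hb]

lemma exists_tendsto_seqModular_zero_smul_eq_one (hp : ∀ j, p j ≠ 0)
    (hunb : ¬BddAbove (Set.range p)) {c : ℝ} (hc : 1 < c) :
    ∃ x : ℕ → ℕ → ℝ, Tendsto (fun k => seqModular p (x k)) atTop (𝓝 0) ∧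
      ∀ k, seqModular p (c • x k) = 1 := by
  choose j hj using fun k : ℕ => (frequently_lt_of_not_bddAbove hunb k).exists
  have hc0 : 0 < c := one_pos.trans hc
  refine ⟨fun k => Pi.single (j k) c⁻¹, ?_, fun k => ?_⟩
  · have hgeom : Tendsto (fun k : ℕ => ENNReal.ofReal (c⁻¹ ^ k)) atTop (𝓝 0) := by
      simpa [Function.comp_def] using (ENNReal.continuous_ofReal.tendsto 0).comp
        (tendsto_pow_atTop_nhds_zero_of_lt_one (inv_nonneg.mpr hc0.le) (inv_lt_one_of_one_lt₀ hc))
    refine tendsto_of_tendsto_of_tendsto_of_le_of_le tendsto_const_nhds hgeom (fun k => zero_le)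
      fun k => ?_
    rw [seqModular_single hp, abs_of_pos (inv_pos.mpr hc0), ← Real.rpow_natCast]
    exact ENNReal.ofReal_le_ofReal (Real.rpow_le_rpow_of_exponent_ge (inv_pos.mpr hc0)
      (inv_le_one_of_one_le₀ hc.le) (hj k).le)
  · rw [← Pi.single_smul', smul_eq_mul, mul_inv_cancel₀ hc0.ne', seqModular_single hp]
    simp

end

/-- For `p = (p_j) ⊆ (1,∞)` the following are equivalent:
(i) `ρ_p` is right-continuous on `ℓ^{(p_n)} = modularSet (seqModular p)`;
(ii) `sup_j p_j < ∞`;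
(iii) `ρ_p` satisfies the `Δ₂`-property. -/
theorem seqModular_right_continuous_iff_sup_finite_iff_delta2
    (p : ℕ → ℝ) (hp : ∀ j, 1 < p j) :
    ((∀ a ∈ modularSet (seqModular p), ∀ l₀ : ℝ, 0 < l₀ →
        Tendsto (fun l : ℝ => seqModular p (l • a)) (nhdsWithin l₀ (Set.Ioi l₀))
          (nhds (seqModular p (l₀ • a)))) ↔
      (∃ M : ℝ, ∀ j, p j ≤ M)) ∧
    ((∃ M : ℝ, ∀ j, p j ≤ M) ↔
      (∀ x : ℕ → ℕ → ℝ, Tendsto (fun k => seqModular p (x k)) atTop (nhds 0) →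
        Tendsto (fun k => seqModular p ((2 : ℝ) • x k)) atTop (nhds 0))) := by
  have hpos : ∀ j, 0 < p j := fun j => one_pos.trans (hp j)
  by_cases hbdd : ∃ M, ∀ j, p j ≤ M
  · obtain ⟨M, hM⟩ := hbdd
    exact ⟨iff_of_true (fun a _ l₀ hl₀ => tendsto_seqModular_smul_nhdsGT (hpos · |>.le) hM a hl₀)
        ⟨M, hM⟩,
      iff_of_true ⟨M, hM⟩ fun x hx => tendsto_seqModular_smul_zero hM one_le_two hx⟩
  have hunb : ¬BddAbove (Set.range p) := by simpa [bddAbove_def] using hbdd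
  refine ⟨iff_of_false (fun hcont => ?_) hbdd, iff_of_false hbdd fun hΔ => ?_⟩
  · obtain ⟨a, ha, hla⟩ := exists_seqModular_lt_top_forall_smul_eq_top (hpos · |>.ne') hunb
    have hlim := hcont a ⟨1, one_pos, by rwa [one_smul]⟩ 1 one_pos
    have htop : Tendsto (fun l : ℝ => seqModular p (l • a)) (𝓝[>] 1) (𝓝 ⊤) :=
      tendsto_const_nhds.congr' (eventually_nhdsWithin_of_forall fun l hl => (hla l hl).symm)
    rw [one_smul] at hlim
    exact ha.ne (tendsto_nhds_unique hlim htop)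
  · obtain ⟨x, hx, hx2⟩ :=
      exists_tendsto_seqModular_zero_smul_eq_one (hpos · |>.ne') hunb one_lt_two
    have hone : Tendsto (fun k => seqModular p ((2 : ℝ) • x k)) atTop (𝓝 1) := by
      simpa only [hx2] using tendsto_const_nhds
    exact one_ne_zero (tendsto_nhds_unique hone (hΔ x hx))
end

section
/- Let Ω ⊆ ℝ^n be open and p : Ω → [1,∞) Borel measurable. The following are equivalent: (i) ρ_p is right-continuous on L^{p(·)}(Ω), i.e., for every u ∈ L^{p(·)}(Ω) and λ₀ > 0, ρ_p(λu) → ρ_p(λ₀u) as λ → λ₀ from the right; (ii) the essential supremum of p over Ω is finite; (iii) ρ_p satisfies the Δ₂-property, i.e., for every sequence (u_k) of measurable functions, ρ_p(u_k) → 0 implies ρ_p(2u_k) → 0. -/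
open Filter Topology ENNReal MeasureTheory

/-- The modular `ρ_p(u) = ∫_Ω |u(x)|^{p(x)} dx` on measurable real functions on `Ω ⊆ ℝ^n`. -/
noncomputable def lpModular {n : ℕ} (Ω : Set (EuclideanSpace ℝ (Fin n)))
    (p : EuclideanSpace ℝ (Fin n) → ℝ) (u : EuclideanSpace ℝ (Fin n) → ℝ) : ℝ≥0∞ :=
  ∫⁻ x in Ω, ENNReal.ofReal (|u x| ^ p x)

/-! If `p ≤ M` a.e., then `ρ(s • u) ≤ max (|s| ^ M) 1 * ρ(u)`. This gives `Δ₂` at once and, by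
dominated convergence, continuity of `l ↦ ρ(l • u)` as soon as `ρ(l • u) < ∞` for one `l > 0`.

If `p` is essentially unbounded, infinitely many level sets `{⌊p⌋₊ = j}` have positive measure,
and on a piece `T` of finite measure of such a level set the intermediate value theorem gives a
constant `c` with `∫_T c^p = ε`. The functions `(c / 2) 1_T` with `∫_T c^p = 1` on levels
`j → ∞` violate `Δ₂`. Gluing pieces `T_k` with `∫_{T_k} c_k^p = 2^{-k}` on levels `j_k > k²` gives
`u` with `ρ(u) < ∞` but `ρ(l • u) ≥ l^{k²} 2^{-k} → ∞` for every `l > 1`, so `l ↦ ρ(l • u)` is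
not right-continuous at `1`. -/

open Set Function

section

variable {α : Type*} [MeasurableSpace α] {μ : Measure α} {p : α → ℝ}

/-- `lpModular Ω p` is `varModular (volume.restrict Ω) p`. -/
noncomputable def varModular (μ : Measure α) (p u : α → ℝ) : ℝ≥0∞ :=
  ∫⁻ x, ENNReal.ofReal (|u x| ^ p x) ∂μ

theorem varModular_smul_le_of_ae_rpow_le {s K : ℝ} (h : ∀ᵐ x ∂μ, |s| ^ p x ≤ K) (u : α → ℝ) :
    varModular μ p (s • u) ≤ ENNReal.ofReal K * varModular μ p u := by
  rw [varModular, varModular, ← lintegral_const_mul' _ _ ofReal_ne_top]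
  refine lintegral_mono_ae (h.mono fun x hx => ?_)
  rw [Pi.smul_apply, smul_eq_mul, abs_mul, Real.mul_rpow (abs_nonneg _) (abs_nonneg _),
    ← ENNReal.ofReal_mul' (by positivity)]
  gcongr

theorem le_varModular_smul_of_ae_le_rpow {s K : ℝ} (h : ∀ᵐ x ∂μ, K ≤ |s| ^ p x) (u : α → ℝ) :
    ENNReal.ofReal K * varModular μ p u ≤ varModular μ p (s • u) := by
  rw [varModular, varModular, ← lintegral_const_mul' _ _ ofReal_ne_top]
  refine lintegral_mono_ae (h.mono fun x hx => ?_)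
  rw [Pi.smul_apply, smul_eq_mul, abs_mul, Real.mul_rpow (abs_nonneg _) (abs_nonneg _),
    ← ENNReal.ofReal_mul' (by positivity)]
  gcongr

theorem varModular_smul_le (hp0 : ∀ᵐ x ∂μ, 0 ≤ p x) {M : ℝ} (hpM : ∀ᵐ x ∂μ, p x ≤ M)
    (s : ℝ) (u : α → ℝ) :
    varModular μ p (s • u) ≤ ENNReal.ofReal (max (|s| ^ M) 1) * varModular μ p u := by
  refine varModular_smul_le_of_ae_rpow_le ?_ u
  filter_upwards [hp0, hpM] with x hx0 hxM
  rcases le_or_gt 1 |s| with hs | hs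
  · exact le_max_of_le_left (Real.rpow_le_rpow_of_exponent_le hs hxM)
  · exact le_max_of_le_right (Real.rpow_le_one (abs_nonneg s) hs.le hx0)

theorem varModular_smul_ne_top (hp0 : ∀ᵐ x ∂μ, 0 ≤ p x) {M : ℝ} (hpM : ∀ᵐ x ∂μ, p x ≤ M)
    {u : α → ℝ} (hu : u ∈ modularSet (varModular μ p)) (s : ℝ) :
    varModular μ p (s • u) ≠ ⊤ := by
  obtain ⟨l, hl, hlu⟩ := hu
  have hsu : s • u = (s / l) • l • u := by rw [smul_smul, div_mul_cancel₀ s hl.ne']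
  rw [hsu]
  exact ne_top_of_le_ne_top (mul_ne_top ofReal_ne_top hlu.ne) (varModular_smul_le hp0 hpM _ _)

theorem tendsto_varModular_smul_zero (hp0 : ∀ᵐ x ∂μ, 0 ≤ p x) {M : ℝ} (hpM : ∀ᵐ x ∂μ, p x ≤ M)
    (s : ℝ) {u : ℕ → α → ℝ} (hu : Tendsto (fun k => varModular μ p (u k)) atTop (𝓝 0)) :
    Tendsto (fun k => varModular μ p (s • u k)) atTop (𝓝 0) := by
  have hK := ENNReal.Tendsto.const_mul hu (Or.inr (ofReal_ne_top (r := max (|s| ^ M) 1)))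
  rw [mul_zero] at hK
  exact tendsto_of_tendsto_of_tendsto_of_le_of_le tendsto_const_nhds hK (fun _ => zero_le)
    fun k => varModular_smul_le hp0 hpM s (u k)

theorem continuous_varModular_smul (hp : AEMeasurable p μ) (hp0 : ∀ᵐ x ∂μ, 0 ≤ p x) {M : ℝ}
    (hpM : ∀ᵐ x ∂μ, p x ≤ M) {u : α → ℝ} (hu : AEMeasurable u μ)
    (hfin : u ∈ modularSet (varModular μ p)) :
    Continuous fun l : ℝ => varModular μ p (l • u) := by
  refine continuous_iff_continuousAt.2 fun l₀ => ?_
  have hnear : ∀ᶠ l in 𝓝 l₀, |l| < |l₀| + 1 :=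
    continuous_abs.continuousAt.eventually_lt continuousAt_const (lt_add_one _)
  refine tendsto_lintegral_filter_of_dominated_convergence'
    (fun x => ENNReal.ofReal (|(|l₀| + 1) * u x| ^ p x))
    (Eventually.of_forall fun l => ((hu.const_mul l).abs.pow hp).ennreal_ofReal) ?_
    (varModular_smul_ne_top hp0 hpM hfin _) ?_
  · filter_upwards [hnear] with l hl
    filter_upwards [hp0] with x hx
    simp only [Pi.smul_apply, smul_eq_mul, abs_mul, abs_of_pos (by positivity : 0 < |l₀| + 1)]
    gcongr
  · filter_upwards [hp0] with x hx
    refine (ENNReal.continuous_ofReal.comp (Continuous.rpow_const ?_ fun _ => Or.inr hx)).tendsto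
      l₀
    fun_prop

theorem varModular_indicator (hp : ∀ᵐ x ∂μ, p x ≠ 0) {T : Set α} (hT : MeasurableSet T)
    (u : α → ℝ) : varModular μ p (T.indicator u) = varModular (μ.restrict T) p u := by
  rw [varModular, varModular, ← lintegral_indicator hT]
  refine lintegral_congr_ae (hp.mono fun x hx => ?_)
  by_cases hxT : x ∈ T <;> simp [hxT, Real.zero_rpow hx]

theorem varModular_restrict_congr {T : Set α} (hT : MeasurableSet T) {u v : α → ℝ}
    (h : EqOn u v T) : varModular (μ.restrict T) p u = varModular (μ.restrict T) p v :=
  setLIntegral_congr_fun hT fun x hx => by rw [h hx]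

theorem varModular_eq_tsum (hp : ∀ᵐ x ∂μ, p x ≠ 0) {T : ℕ → Set α}
    (hT : ∀ k, MeasurableSet (T k)) (hTd : Pairwise (Disjoint on T)) {u : α → ℝ}
    (hu : u.support ⊆ ⋃ k, T k) :
    varModular μ p u = ∑' k, varModular (μ.restrict (T k)) p u := by
  calc varModular μ p u = varModular μ p ((⋃ k, T k).indicator u) := by
        rw [indicator_eq_self.2 hu]
    _ = ∑' k, varModular (μ.restrict (T k)) p u := by
        rw [varModular_indicator hp (MeasurableSet.iUnion hT)]
        exact lintegral_iUnion hT hTd _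

theorem exists_pos_varModular_const_eq (hμ0 : μ univ ≠ 0) (hμ : μ univ ≠ ⊤)
    (hp : AEMeasurable p μ) (hp1 : ∀ᵐ x ∂μ, 1 ≤ p x) {M : ℝ} (hpM : ∀ᵐ x ∂μ, p x ≤ M)
    {ε : ℝ≥0∞} (hε0 : ε ≠ 0) (hε : ε ≠ ⊤) :
    ∃ c > 0, varModular μ p (fun _ => c) = ε := by
  have hp0 : ∀ᵐ x ∂μ, 0 ≤ p x := hp1.mono fun x hx => zero_le_one.trans hx
  have hconst : ∀ c : ℝ, (fun _ : α => c) = c • (1 : α → ℝ) := fun c => by ext; simp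
  have hone : varModular μ p 1 = μ univ := by simp [varModular]
  have hcont : Continuous fun c : ℝ => varModular μ p (c • 1) :=
    continuous_varModular_smul hp hp0 hpM aemeasurable_const
      ⟨1, one_pos, by rw [one_smul, hone]; exact hμ.lt_top⟩
  set t := (ε / μ univ).toReal
  have ht : ENNReal.ofReal t = ε / μ univ := ofReal_toReal (div_ne_top hε hμ0)
  have ht0 : 0 < t := toReal_pos (ENNReal.div_pos hε0 hμ).ne' (div_ne_top hε hμ0)
  have hlow : varModular μ p (min 1 t • 1) ≤ ε := by
    calc varModular μ p (min 1 t • 1) ≤ ENNReal.ofReal (min 1 t) * μ univ := by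
          rw [← hone]
          refine varModular_smul_le_of_ae_rpow_le (hp1.mono fun x hx => ?_) 1
          rw [abs_of_pos (lt_min one_pos ht0)]
          exact Real.rpow_le_self_of_le_one (lt_min one_pos ht0).le (min_le_left _ _) hx
      _ ≤ ε / μ univ * μ univ := by rw [← ht]; gcongr; exact min_le_right _ _
      _ = ε := ENNReal.div_mul_cancel hμ0 hμ
  have hhigh : ε ≤ varModular μ p (max 1 t • 1) := by
    calc ε = ε / μ univ * μ univ := (ENNReal.div_mul_cancel hμ0 hμ).symm
      _ ≤ ENNReal.ofReal (max 1 t) * μ univ := by rw [← ht]; gcongr; exact le_max_right _ _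
      _ ≤ varModular μ p (max 1 t • 1) := by
          rw [← hone]
          refine le_varModular_smul_of_ae_le_rpow (hp1.mono fun x hx => ?_) 1
          rw [abs_of_pos (lt_max_of_lt_left one_pos)]
          exact Real.self_le_rpow_of_one_le (le_max_left _ _) hx
  obtain ⟨c, hc, hcε⟩ := intermediate_value_Icc ((min_le_left _ _).trans (le_max_left _ _))
    hcont.continuousOn ⟨hlow, hhigh⟩
  exact ⟨c, (lt_min one_pos ht0).trans_le hc.1, by rw [hconst]; exact hcε⟩

theorem infinite_setOf_measure_floor_eq_ne_zero (hp : ¬ ∃ M : ℝ, ∀ᵐ x ∂μ, p x ≤ M) :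
    {j : ℕ | μ {x | ⌊p x⌋₊ = j} ≠ 0}.Infinite := by
  contrapose! hp
  obtain ⟨N, hN⟩ := hp.bddAbove
  have hfloor : ∀ᵐ x ∂μ, ⌊p x⌋₊ ≤ N := by
    refine measure_mono_null (t := ⋃ j > N, {x | ⌊p x⌋₊ = j}) (fun x (hx : ¬ ⌊p x⌋₊ ≤ N) => ?_)
      (measure_biUnion_null_iff (to_countable _) |>.2 fun j hj => ?_)
    · exact mem_biUnion (not_le.1 hx) rfl
    · by_contra h
      exact (not_le.2 hj) (hN h)
  exact ⟨N + 1, hfloor.mono fun x hx =>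
    (Nat.lt_floor_add_one (p x)).le.trans (by exact_mod_cast Nat.add_le_add_right hx 1)⟩

theorem exists_subset_floor_eq_varModular_const_eq [SigmaFinite μ] (hp : Measurable p) {j : ℕ}
    (hj : j ≠ 0) (hμj : μ {x | ⌊p x⌋₊ = j} ≠ 0) {ε : ℝ≥0∞} (hε0 : ε ≠ 0) (hε : ε ≠ ⊤) :
    ∃ T ⊆ {x | ⌊p x⌋₊ = j}, MeasurableSet T ∧
      ∃ c > 0, varModular (μ.restrict T) p (fun _ => c) = ε := by
  obtain ⟨T, hT, hTj, hT0, hTtop⟩ :=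
    Measure.exists_subset_measure_lt_top (measurableSet_eq_fun hp.nat_floor measurable_const)
      (pos_iff_ne_zero.2 hμj)
  have hpT : ∀ᵐ x ∂μ.restrict T, j ≤ p x ∧ p x < j + 1 :=
    ae_restrict_of_forall_mem hT fun x hx => (Nat.floor_eq_iff' hj).1 (hTj hx)
  refine ⟨T, hTj, hT, exists_pos_varModular_const_eq ?_ ?_ hp.aemeasurable
    (hpT.mono fun x hx => le_trans (by exact_mod_cast Nat.one_le_iff_ne_zero.2 hj) hx.1)
    (hpT.mono fun x hx => hx.2.le) hε0 hε⟩
  · rw [Measure.restrict_apply_univ]; exact hT0.ne'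
  · rw [Measure.restrict_apply_univ]; exact hTtop.ne

theorem exists_tendsto_varModular_zero_and_two_smul_eq_one [SigmaFinite μ] (hp : Measurable p)
    (hp0 : ∀ᵐ x ∂μ, p x ≠ 0) (hunb : ¬ ∃ M : ℝ, ∀ᵐ x ∂μ, p x ≤ M) :
    ∃ u : ℕ → α → ℝ, (∀ k, Measurable (u k)) ∧
      Tendsto (fun k => varModular μ p (u k)) atTop (𝓝 0) ∧
      ∀ k, varModular μ p ((2 : ℝ) • u k) = 1 := by
  have hblock (k : ℕ) : ∃ j > k, ∃ T ⊆ {x | ⌊p x⌋₊ = j}, MeasurableSet T ∧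
      ∃ c > 0, varModular (μ.restrict T) p (fun _ => c) = 1 := by
    obtain ⟨j, hj, hkj⟩ := (infinite_setOf_measure_floor_eq_ne_zero hunb).exists_gt k
    exact ⟨j, hkj, exists_subset_floor_eq_varModular_const_eq hp (Nat.ne_zero_of_lt hkj) hj
      one_ne_zero one_ne_top⟩
  choose j hkj T hTj hT c _ hTc using hblock
  have hsmall (k : ℕ) : varModular μ p ((T k).indicator ((2⁻¹ : ℝ) • fun _ => c k)) ≤
      ENNReal.ofReal ((1 / 2) ^ k) := by
    have hpT : ∀ᵐ x ∂μ.restrict (T k), |(2⁻¹ : ℝ)| ^ p x ≤ (1 / 2) ^ k :=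
      ae_restrict_of_forall_mem (hT k) fun x hx => by
        rw [abs_of_pos (by norm_num), ← Real.rpow_natCast, one_div]
        exact Real.rpow_le_rpow_of_exponent_ge (by norm_num) (by norm_num) <|
          (Nat.cast_le.2 (hkj k).le).trans
            ((Nat.floor_eq_iff' (Nat.ne_zero_of_lt (hkj k))).1 (hTj k hx)).1
    rw [varModular_indicator hp0 (hT k)]
    simpa [hTc] using varModular_smul_le_of_ae_rpow_le hpT fun _ => c k
  refine ⟨fun k => (T k).indicator ((2⁻¹ : ℝ) • fun _ => c k),
    fun k => measurable_const.indicator (hT k), ?_, fun k => ?_⟩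
  · have hgeom : Tendsto (fun k : ℕ => ENNReal.ofReal ((1 / 2 : ℝ) ^ k)) atTop (𝓝 0) := by
      simpa using ENNReal.tendsto_ofReal
        (tendsto_pow_atTop_nhds_zero_of_lt_one (by norm_num) (by norm_num : (1 / 2 : ℝ) < 1))
    exact tendsto_of_tendsto_of_tendsto_of_le_of_le tendsto_const_nhds hgeom (fun _ => zero_le)
      hsmall
  · have h2 : (2 : ℝ) • (T k).indicator ((2⁻¹ : ℝ) • fun _ => c k) =
        (T k).indicator fun _ => c k := by
      ext x; by_cases hx : x ∈ T k <;> simp [hx]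
    rw [h2, varModular_indicator hp0 (hT k), hTc]

theorem tendsto_pow_sq_mul_half_pow_atTop {l : ℝ} (hl : 1 < l) :
    Tendsto (fun k : ℕ => l ^ (k ^ 2) * (1 / 2) ^ k) atTop atTop := by
  have hlk : ∀ᶠ k : ℕ in atTop, 2 ≤ l ^ k / 2 :=
    ((tendsto_pow_atTop_atTop_of_one_lt hl).atTop_div_const two_pos).eventually_ge_atTop 2
  refine tendsto_atTop_mono' atTop ?_ (tendsto_pow_atTop_atTop_of_one_lt one_lt_two)
  filter_upwards [hlk] with k hk
  calc (2 : ℝ) ^ k ≤ (l ^ k / 2) ^ k := pow_le_pow_left₀ zero_le_two hk k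
    _ = l ^ (k ^ 2) * (1 / 2) ^ k := by
      rw [div_pow, ← pow_mul, ← sq, one_div_pow, div_eq_mul_one_div]

theorem exists_measurable_eqOn_const_of_subset_floor_eq (hp : Measurable p) {J : ℕ → ℕ}
    (hJ : Injective J) {T : ℕ → Set α} (hT : ∀ k, MeasurableSet (T k))
    (hTJ : ∀ k, T k ⊆ {x | ⌊p x⌋₊ = J k}) (c : ℕ → ℝ) :
    ∃ u : α → ℝ, Measurable u ∧ u.support ⊆ ⋃ k, T k ∧ ∀ k, EqOn u (fun _ => c k) (T k) := by
  refine ⟨(⋃ k, T k).indicator fun x => extend J c 0 ⌊p x⌋₊,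
    ((measurable_from_nat (f := extend J c 0)).comp hp.nat_floor).indicator
      (MeasurableSet.iUnion hT), support_indicator_subset, fun k x hx => ?_⟩
  simp only [indicator_of_mem (mem_iUnion_of_mem k hx), show ⌊p x⌋₊ = J k from hTJ k hx,
    hJ.extend_apply]

theorem exists_varModular_ne_top_and_smul_eq_top [SigmaFinite μ] (hp : Measurable p)
    (hp0 : ∀ᵐ x ∂μ, p x ≠ 0) (hunb : ¬ ∃ M : ℝ, ∀ᵐ x ∂μ, p x ≤ M) :
    ∃ u : α → ℝ, Measurable u ∧ varModular μ p u ≠ ⊤ ∧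
      ∀ l : ℝ, 1 < l → varModular μ p (l • u) = ⊤ := by
  have hP := infinite_setOf_measure_floor_eq_ne_zero hunb
  set J : ℕ → ℕ := fun k => Nat.nth (fun j => μ {x | ⌊p x⌋₊ = j} ≠ 0) (k ^ 2 + 1)
  have hJ : StrictMono J := (Nat.nth_strictMono hP).comp fun a b hab => by
    show a ^ 2 + 1 < b ^ 2 + 1; gcongr
  have hJsq (k : ℕ) : k ^ 2 < J k := (Nat.nth_strictMono hP).id_le _
  have hblock (k : ℕ) := exists_subset_floor_eq_varModular_const_eq hp (j := J k)
    (Nat.ne_zero_of_lt (hJsq k)) (Nat.nth_mem_of_infinite hP _)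
    (ENNReal.ofReal_pos.2 (by positivity : (0 : ℝ) < (1 / 2) ^ k)).ne' ofReal_ne_top
  choose T hTJ hT c _ hTc using hblock
  have hTd : Pairwise (Disjoint on T) := fun k k' hkk' =>
    ((disjoint_singleton.2 (hJ.injective.ne hkk')).preimage _).mono (hTJ k) (hTJ k')
  obtain ⟨u, hum, hus, hu⟩ := exists_measurable_eqOn_const_of_subset_floor_eq hp hJ.injective hT
    hTJ c
  have hpT (k : ℕ) : ∀ᵐ x ∂μ.restrict (T k), (k ^ 2 : ℕ) ≤ p x :=
    ae_restrict_of_forall_mem (hT k) fun x hx => (Nat.cast_le.2 (hJsq k).le).trans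
      ((Nat.floor_eq_iff' (Nat.ne_zero_of_lt (hJsq k))).1 (hTJ k hx)).1
  refine ⟨u, hum, ?_, fun l hl => ?_⟩
  · rw [varModular_eq_tsum hp0 hT hTd hus,
      tsum_congr fun k => (varModular_restrict_congr (hT k) (hu k)).trans (hTc k),
      ← ENNReal.ofReal_tsum_of_nonneg (fun _ => by positivity) summable_geometric_two]
    exact ofReal_ne_top
  · refine top_le_iff.1 (le_of_tendsto' (ENNReal.tendsto_ofReal_atTop.comp
      (tendsto_pow_sq_mul_half_pow_atTop hl)) fun k => ?_)
    have hlp : ∀ᵐ x ∂μ.restrict (T k), l ^ (k ^ 2) ≤ |l| ^ p x := (hpT k).mono fun x hx => by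
      rw [abs_of_pos (zero_lt_one.trans hl), ← Real.rpow_natCast]
      exact Real.rpow_le_rpow_of_exponent_le hl.le (by exact_mod_cast hx)
    calc ENNReal.ofReal (l ^ (k ^ 2) * (1 / 2) ^ k)
        = ENNReal.ofReal (l ^ (k ^ 2)) * varModular (μ.restrict (T k)) p (fun _ => c k) := by
          rw [hTc, ENNReal.ofReal_mul (by positivity)]
      _ ≤ varModular (μ.restrict (T k)) p (l • fun _ => c k) :=
          le_varModular_smul_of_ae_le_rpow hlp _
      _ = varModular (μ.restrict (T k)) p (l • u) :=
          varModular_restrict_congr (hT k) fun x hx => by simp [hu k hx]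
      _ ≤ varModular μ p (l • u) := lintegral_mono' Measure.restrict_le_self le_rfl

end

/-- For an open `Ω ⊆ ℝ^n` and Borel measurable `p : Ω → [1,∞)` the following are equivalent:
(i) `ρ_p` is right-continuous on `L^{p(·)}(Ω)`;
(ii) the essential supremum of `p` over `Ω` is finite;
(iii) `ρ_p` satisfies the `Δ₂`-property. -/
theorem lpModular_right_continuous_iff_essSup_finite_iff_delta2
    {n : ℕ} (Ω : Set (EuclideanSpace ℝ (Fin n))) (hΩ : IsOpen Ω)
    (p : EuclideanSpace ℝ (Fin n) → ℝ) (hpm : Measurable p) (hp1 : ∀ x ∈ Ω, 1 ≤ p x) :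
    ((∀ u : EuclideanSpace ℝ (Fin n) → ℝ, Measurable u → u ∈ modularSet (lpModular Ω p) →
        ∀ l₀ : ℝ, 0 < l₀ →
          Tendsto (fun l : ℝ => lpModular Ω p (l • u)) (nhdsWithin l₀ (Set.Ioi l₀))
            (nhds (lpModular Ω p (l₀ • u)))) ↔
      (∃ M : ℝ, ∀ᵐ x ∂(volume.restrict Ω), p x ≤ M)) ∧
    ((∃ M : ℝ, ∀ᵐ x ∂(volume.restrict Ω), p x ≤ M) ↔
      (∀ u : ℕ → EuclideanSpace ℝ (Fin n) → ℝ, (∀ k, Measurable (u k)) →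
        Tendsto (fun k => lpModular Ω p (u k)) atTop (nhds 0) →
        Tendsto (fun k => lpModular Ω p ((2 : ℝ) • u k)) atTop (nhds 0))) := by
  have hp1' : ∀ᵐ x ∂volume.restrict Ω, 1 ≤ p x := ae_restrict_of_forall_mem hΩ.measurableSet hp1
  have hp0 : ∀ᵐ x ∂volume.restrict Ω, 0 ≤ p x := hp1'.mono fun x hx => zero_le_one.trans hx
  have hpne : ∀ᵐ x ∂volume.restrict Ω, p x ≠ 0 := hp1'.mono fun x hx => by positivity
  refine ⟨⟨fun hrc => ?_, fun ⟨M, hM⟩ u hu hfin l₀ _ => ?_⟩,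
    ⟨fun ⟨M, hM⟩ u _ h => tendsto_varModular_smul_zero hp0 hM 2 h, fun hΔ => ?_⟩⟩
  · by_contra hunb
    obtain ⟨u, hu, hfin, htop⟩ := exists_varModular_ne_top_and_smul_eq_top hpm hpne hunb
    have hrc1 := hrc u hu ⟨1, one_pos, by rwa [one_smul, lt_top_iff_ne_top]⟩ 1 one_pos
    rw [one_smul] at hrc1
    have hev : ∀ᶠ l in 𝓝[>] (1 : ℝ), ⊤ = lpModular Ω p (l • u) :=
      eventually_nhdsWithin_of_forall fun l hl => (htop l hl).symm
    exact hfin (tendsto_nhds_unique (tendsto_const_nhds.congr' hev) hrc1).symm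
  · exact (continuous_varModular_smul hpm.aemeasurable hp0 hM hu.aemeasurable hfin).tendsto l₀
      |>.mono_left nhdsWithin_le_nhds
  · by_contra hunb
    obtain ⟨u, hu, h0, h2⟩ := exists_tendsto_varModular_zero_and_two_smul_eq_one hpm hpne hunb
    have h1 := hΔ u hu h0
    rw [show (fun k => lpModular Ω p ((2 : ℝ) • u k)) = fun _ => 1 from funext h2] at h1
    exact one_ne_zero (tendsto_nhds_unique tendsto_const_nhds h1)
end
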